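/- arXiv:2311.08578 — 2 statements merged into one kernel-verified Lean document; each statement's English description precedes it below -/
import Mathlib

section
/- Let α : ℝ → ℝ be three times continuously differentiable on an open interval I with α'(t) > 0 for all t ∈ I, and let q : ℝ → ℝ be continuous on I. Suppose α satisfies Kummer's equation q(t) − (α'(t))² + (3/4)(α''(t)/α'(t))² − (1/2) α'''(t)/α'(t) = 0 on I. Then for any a ∈ I, the function y(t) = (α'(t))^{−1/2} cos(α(t)) satisfies y''(t) + q(t) y(t) = 0 on I. -/
/-!
Write `y = u · cos α` with `u = (α')^{-1/2}`. Then
`y'' = (u'' - α'² u) cos α - (α'' u + 2 α' u') sin α`, and the choice of `u` is exactly what makes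
`α'' u + 2 α' u' = 0` (i.e. `u² α'` is constant), so the sine terms cancel. A direct computation
gives `u'' = ((3/4)(α''/α')² - (1/2) α'''/α') u`, so `y'' + q y = u cos α · K`, where `K` is the
left-hand side of Kummer's equation.
-/

open Real Filter Topology

theorem ContDiffOn.hasDerivAt_deriv {f : ℝ → ℝ} {s : Set ℝ} {n : WithTop ℕ∞}
    (hf : ContDiffOn ℝ n f s) (hs : IsOpen s) (hn : 1 ≤ n) {x : ℝ} (hx : x ∈ s) :
    HasDerivAt f (deriv f x) x :=
  ((hf.differentiableOn (by positivity)).differentiableAt (hs.mem_nhds hx)).hasDerivAt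

theorem hasDerivAt_deriv_cos_comp_mul {s : Set ℝ} {α α₁ α₂ u u₁ u₂ : ℝ → ℝ} (hs : IsOpen s)
    (hα : ∀ x ∈ s, HasDerivAt α (α₁ x) x) (hα₁ : ∀ x ∈ s, HasDerivAt α₁ (α₂ x) x)
    (hu : ∀ x ∈ s, HasDerivAt u (u₁ x) x) (hu₁ : ∀ x ∈ s, HasDerivAt u₁ (u₂ x) x)
    {t : ℝ} (ht : t ∈ s) :
    HasDerivAt (deriv fun x => cos (α x) * u x)
      (cos (α t) * (u₂ t - α₁ t ^ 2 * u t) - sin (α t) * (α₂ t * u t + 2 * α₁ t * u₁ t)) t := by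
  have hderiv : deriv (fun x => cos (α x) * u x) =ᶠ[𝓝 t]
      fun x => -sin (α x) * α₁ x * u x + cos (α x) * u₁ x :=
    eventually_of_mem (hs.mem_nhds ht) fun x hx => by
      simpa [mul_assoc] using (((hα x hx).cos.fun_mul (hu x hx)).deriv)
  refine (((((hα t ht).sin.fun_neg.fun_mul (hα₁ t ht)).fun_mul (hu t ht)).add
    ((hα t ht).cos.fun_mul (hu₁ t ht))).congr_of_eventuallyEq hderiv).congr_deriv ?_
  ring

theorem HasDerivAt.inv_sqrt {f : ℝ → ℝ} {f' t : ℝ} (hf : HasDerivAt f f' t) (ht : 0 < f t) :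
    HasDerivAt (fun x => (√(f x))⁻¹) (-(f' / (2 * f t)) * (√(f t))⁻¹) t := by
  have hs : √(f t) ≠ 0 := (sqrt_pos.mpr ht).ne'
  refine ((hf.sqrt ht.ne').fun_inv hs).congr_deriv ?_
  field_simp
  rw [sq_sqrt ht.le]

theorem hasDerivAt_neg_div_two_mul_inv_sqrt {f f₁ : ℝ → ℝ} {f₂ t : ℝ}
    (hf : HasDerivAt f (f₁ t) t) (hf₁ : HasDerivAt f₁ f₂ t) (ht : 0 < f t) :
    HasDerivAt (fun x => -(f₁ x / (2 * f x)) * (√(f x))⁻¹)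
      ((3 / 4 * (f₁ t / f t) ^ 2 - 1 / 2 * (f₂ / f t)) * (√(f t))⁻¹) t := by
  refine ((hf₁.fun_div (hf.const_mul 2) (by positivity)).fun_neg.fun_mul
    (hf.inv_sqrt ht)).congr_deriv ?_
  field_simp
  ring

theorem kummer_gives_solution_general (A B : ℝ) (α q : ℝ → ℝ)
    (hα : ContDiffOn ℝ 3 α (Set.Ioo A B))
    (hpos : ∀ t ∈ Set.Ioo A B, 0 < deriv α t)
    (hkummer : ∀ t ∈ Set.Ioo A B,
      q t - (deriv α t) ^ 2 + (3 / 4) * (deriv (deriv α) t / deriv α t) ^ 2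
        - (1 / 2) * (deriv (deriv (deriv α)) t / deriv α t) = 0)
    (y : ℝ → ℝ) (hy : y = fun t => Real.cos (α t) / Real.sqrt (deriv α t)) :
    ∀ t ∈ Set.Ioo A B, deriv (deriv y) t + q t * y t = 0 := by
  intro t ht
  have hI : IsOpen (Set.Ioo A B) := isOpen_Ioo
  have hα₂ := hα.deriv_of_isOpen hI (m := 2) (by norm_num)
  have hα₃ := hα₂.deriv_of_isOpen hI (m := 1) (by norm_num)
  have hd₁ x (hx : x ∈ Set.Ioo A B) := hα.hasDerivAt_deriv hI (by norm_num) hx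
  have hd₂ x (hx : x ∈ Set.Ioo A B) := hα₂.hasDerivAt_deriv hI (by norm_num) hx
  have hd₃ x (hx : x ∈ Set.Ioo A B) := hα₃.hasDerivAt_deriv hI (by norm_num) hx
  have hy' : y = fun x => cos (α x) * (√(deriv α x))⁻¹ := by simp only [hy, div_eq_mul_inv]
  have hy'' := hasDerivAt_deriv_cos_comp_mul hI hd₁ hd₂
    (fun x hx => (hd₂ x hx).inv_sqrt (hpos x hx))
    (fun x hx => hasDerivAt_neg_div_two_mul_inv_sqrt (hd₂ x hx) (hd₃ x hx) (hpos x hx)) ht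
  have hsin : deriv (deriv α) t * (√(deriv α t))⁻¹
      + 2 * deriv α t * (-(deriv (deriv α) t / (2 * deriv α t)) * (√(deriv α t))⁻¹) = 0 := by
    field_simp [(hpos t ht).ne']
    ring
  rw [← hy', hsin] at hy''
  rw [hy''.deriv, hy']
  linear_combination (cos (α t) * (√(deriv α t))⁻¹) * hkummer t ht

theorem kummer_gives_solution (A B : ℝ) (α q : ℝ → ℝ)
    (hα : ContDiffOn ℝ 3 α (Set.Ioo A B))
    (hpos : ∀ t ∈ Set.Ioo A B, 0 < deriv α t)
    (hq : ContinuousOn q (Set.Ioo A B))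
    (hkummer : ∀ t ∈ Set.Ioo A B,
      q t - (deriv α t) ^ 2 + (3 / 4) * (deriv (deriv α) t / deriv α t) ^ 2
        - (1 / 2) * (deriv (deriv (deriv α)) t / deriv α t) = 0)
    (a : ℝ) (ha : a ∈ Set.Ioo A B)
    (y : ℝ → ℝ) (hy : y = fun t => Real.cos (α t) / Real.sqrt (deriv α t)) :
    ∀ t ∈ Set.Ioo A B, deriv (deriv y) t + q t * y t = 0 :=
  kummer_gives_solution_general A B α q hα hpos hkummer y hy
end

section
/- Let α : ℝ → ℝ be three times continuously differentiable on an open interval I with α'(t) > 0 on I, and let q : ℝ → ℝ be continuous on I. Define ψ(t) = i α(t) − (1/2) log(α'(t)). Then ψ satisfies the Riccati equation ψ''(t) + (ψ'(t))² + q(t) = 0 on I if and only if α satisfies Kummer's equation q(t) − (α'(t))² + (3/4)(α''(t)/α'(t))² − (1/2) α'''(t)/α'(t) = 0 on I. -/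
/-!
Write `a, b, c` for `α', α'', α'''`. Then `ψ' = i a - b / (2a)` and
`ψ'' = i b - (c a - b²) / (2a²)`, so in `ψ'' + ψ'²` the imaginary parts `i b - i b` cancel and
the real part is `-a² + (3/4)(b/a)² - (1/2)(c/a)`: the Riccati residual of `ψ` is the Kummer
residual of `α`, viewed as a complex number.
-/

open Complex

lemma riccati_residual_eq_kummer_residual {a : ℝ} (ha : a ≠ 0) (b c q : ℝ) :
    (I * b - 1 / 2 * (((c * a - b * b) / a ^ 2 : ℝ) : ℂ))
        + (I * a - 1 / 2 * ((b / a : ℝ) : ℂ)) ^ 2 + q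
      = ((q - a ^ 2 + 3 / 4 * (b / a) ^ 2 - 1 / 2 * (c / a) : ℝ) : ℂ) := by
  have haC : (a : ℂ) ≠ 0 := ofReal_ne_zero.mpr ha
  push_cast
  field_simp
  ring_nf
  rw [I_sq]
  ring

lemma hasDerivAt_phase {α : ℝ → ℝ} {t : ℝ} (h₁ : DifferentiableAt ℝ α t)
    (h₂ : DifferentiableAt ℝ (deriv α) t) (h₀ : deriv α t ≠ 0) :
    HasDerivAt (fun s => I * α s - 1 / 2 * (Real.log (deriv α s) : ℂ))
      (I * deriv α t - 1 / 2 * ((deriv (deriv α) t / deriv α t : ℝ) : ℂ)) t :=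
  (h₁.hasDerivAt.ofReal_comp.const_mul I).sub
    ((h₂.hasDerivAt.log h₀).ofReal_comp.const_mul (1 / 2))

lemma deriv_phase {α : ℝ → ℝ} {s : Set ℝ} {t : ℝ} (hs : IsOpen s)
    (hα : ContDiffOn ℝ 2 α s) (h₀ : deriv α t ≠ 0) (ht : t ∈ s) :
    deriv (fun s => I * α s - 1 / 2 * (Real.log (deriv α s) : ℂ)) t
      = I * deriv α t - 1 / 2 * ((deriv (deriv α) t / deriv α t : ℝ) : ℂ) :=
  have hα₁ : ContDiffOn ℝ 1 (deriv α) s := hα.deriv_of_isOpen hs (by norm_num)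
  (hasDerivAt_phase ((hα.differentiableOn (by simp)).differentiableAt (hs.mem_nhds ht))
    ((hα₁.differentiableOn (by simp)).differentiableAt (hs.mem_nhds ht)) h₀).deriv

lemma deriv_deriv_phase {α : ℝ → ℝ} {s : Set ℝ} {t : ℝ} (hs : IsOpen s)
    (hα : ContDiffOn ℝ 3 α s) (h₀ : ∀ x ∈ s, deriv α x ≠ 0) (ht : t ∈ s) :
    deriv (deriv fun s => I * α s - 1 / 2 * (Real.log (deriv α s) : ℂ)) t
      = I * deriv (deriv α) t - 1 / 2 * (((deriv (deriv (deriv α)) t * deriv α t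
          - deriv (deriv α) t * deriv (deriv α) t) / deriv α t ^ 2 : ℝ) : ℂ) := by
  have hα₁ : ContDiffOn ℝ 2 (deriv α) s := hα.deriv_of_isOpen hs (by norm_num)
  have hα₂ : ContDiffOn ℝ 1 (deriv (deriv α)) s := hα₁.deriv_of_isOpen hs (by norm_num)
  have hderiv : (deriv fun s => I * α s - 1 / 2 * (Real.log (deriv α s) : ℂ))
      =ᶠ[nhds t] fun x =>
        I * deriv α x - 1 / 2 * ((deriv (deriv α) x / deriv α x : ℝ) : ℂ) := by
    filter_upwards [hs.mem_nhds ht] with x hx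
    exact deriv_phase hs (hα.of_le (by norm_num)) (h₀ x hx) hx
  have hd₁ : HasDerivAt (deriv α) (deriv (deriv α) t) t :=
    ((hα₁.differentiableOn (by simp)).differentiableAt (hs.mem_nhds ht)).hasDerivAt
  have hd₂ : HasDerivAt (deriv (deriv α)) (deriv (deriv (deriv α)) t) t :=
    ((hα₂.differentiableOn (by simp)).differentiableAt (hs.mem_nhds ht)).hasDerivAt
  rw [hderiv.deriv_eq]
  exact ((hd₁.ofReal_comp.const_mul I).sub
    ((hd₂.div hd₁ (h₀ t ht)).ofReal_comp.const_mul (1 / 2))).deriv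

theorem riccati_iff_kummer_general (A B : ℝ) (α q : ℝ → ℝ)
    (hα : ContDiffOn ℝ 3 α (Set.Ioo A B))
    (hpos : ∀ t ∈ Set.Ioo A B, 0 < deriv α t)
    (ψ : ℝ → ℂ)
    (hψ : ψ = fun t =>
      Complex.I * (α t : ℂ) - (1 / 2 : ℂ) * (Real.log (deriv α t) : ℂ)) :
    (∀ t ∈ Set.Ioo A B,
        deriv (deriv ψ) t + (deriv ψ t) ^ 2 + (q t : ℂ) = 0)
      ↔ (∀ t ∈ Set.Ioo A B,
        q t - (deriv α t) ^ 2 + (3 / 4) * (deriv (deriv α) t / deriv α t) ^ 2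
          - (1 / 2) * (deriv (deriv (deriv α)) t / deriv α t) = 0) := by
  have h₀ : ∀ t ∈ Set.Ioo A B, deriv α t ≠ 0 := fun t ht => (hpos t ht).ne'
  have residual : ∀ t ∈ Set.Ioo A B, deriv (deriv ψ) t + (deriv ψ t) ^ 2 + (q t : ℂ)
      = ((q t - (deriv α t) ^ 2 + (3 / 4) * (deriv (deriv α) t / deriv α t) ^ 2
          - (1 / 2) * (deriv (deriv (deriv α)) t / deriv α t) : ℝ) : ℂ) := by
    intro t ht
    subst hψ
    rw [deriv_deriv_phase isOpen_Ioo hα h₀ ht,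
      deriv_phase isOpen_Ioo (hα.of_le (by norm_num)) (h₀ t ht) ht]
    exact riccati_residual_eq_kummer_residual (h₀ t ht) _ _ _
  refine forall₂_congr fun t ht => ?_
  rw [residual t ht, ofReal_eq_zero]

theorem riccati_iff_kummer (A B : ℝ) (α q : ℝ → ℝ)
    (hα : ContDiffOn ℝ 3 α (Set.Ioo A B))
    (hpos : ∀ t ∈ Set.Ioo A B, 0 < deriv α t)
    (hq : ContinuousOn q (Set.Ioo A B))
    (ψ : ℝ → ℂ)
    (hψ : ψ = fun t =>
      Complex.I * (α t : ℂ) - (1 / 2 : ℂ) * (Real.log (deriv α t) : ℂ)) :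
    (∀ t ∈ Set.Ioo A B,
        deriv (deriv ψ) t + (deriv ψ t) ^ 2 + (q t : ℂ) = 0)
      ↔ (∀ t ∈ Set.Ioo A B,
        q t - (deriv α t) ^ 2 + (3 / 4) * (deriv (deriv α) t / deriv α t) ^ 2
          - (1 / 2) * (deriv (deriv (deriv α)) t / deriv α t) = 0) :=
  riccati_iff_kummer_general A B α q hα hpos ψ hψ
end
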